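/- For every n ≥ 1, (sp(n) - 1)/2 ≡ z(n-1) (mod 2), where z is the paper-folding sequence. -/
import Mathlib


def sp : ℕ → ℕ
  | 0 => 0
  | 1 => 1
  | n + 2 => if (n + 2) % 2 = 0 then sp ((n + 2) / 2) else 2 * sp (n + 1) + sp n
decreasing_by all_goals omega

def z (n : ℕ) : ℕ :=
  if n % 2 = 0 then (if n % 4 = 0 then 0 else 1) else z (n / 2)
decreasing_by omega

lemma sp_odd : ∀ n, 1 ≤ n → sp n % 2 = 1 := by
  intro n
  induction n using Nat.strong_induction_on with
  | _ n ih =>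
    intro hn
    match n, hn with
    | 1, _ => simp [sp]
    | (k+2), _ =>
      rw [sp]
      by_cases h : (k+2) % 2 = 0
      · simp only [h, if_true]
        exact ih ((k+2)/2) (by omega) (by omega)
      · simp only [h, if_false]
        have := ih k (by omega) (by omega)
        omega

lemma sp_odd_idx : ∀ m, ((sp (2*m+1) - 1) / 2) % 2 = m % 2 := by
  intro m
  induction m with
  | zero => simp [sp]
  | succ m ih =>
    have h1 : 2*(m+1)+1 = (2*m+1) + 2 := by ring
    rw [h1, sp]
    have h2 : (2*m+1+2) % 2 = 1 := by omega
    simp only [h2]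
    norm_num
    have h3 : 2*m+1+1 = 2*(m+1) := by ring
    have h4 : sp (2*(m+1)) = sp (m+1) := by
      rcases Nat.eq_zero_or_pos m with hm | hm
      · subst hm; simp [sp]
      · rw [show 2*(m+1) = (2*m) + 2 by ring, sp]
        simp only [show (2*m+2) % 2 = 0 by omega, if_true]
        congr 1; omega
    rw [h3, h4]
    have h5 := sp_odd (m+1) (by omega)
    have h6 := sp_odd (2*m+1) (by omega)
    omega

lemma z_le_one : ∀ n, z n ≤ 1 := by
  intro n
  induction n using Nat.strong_induction_on with
  | _ n ih =>
    rw [z]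
    by_cases h : n % 2 = 0
    · simp only [h, if_true]; split <;> omega
    · simp only [h, if_false]
      exact ih (n/2) (by omega)

lemma z_even (m : ℕ) : z (2*m) = m % 2 := by
  rw [z]
  simp only [show (2*m) % 2 = 0 by omega, if_true]
  by_cases h : m % 2 = 0
  · simp only [show (2*m) % 4 = 0 by omega, if_true]; omega
  · simp only [show ¬((2*m) % 4 = 0) by omega, if_false]; omega

lemma z_odd (m : ℕ) : z (2*m+1) = z m := by
  rw [z]
  simp only [show ¬((2*m+1) % 2 = 0) by omega, if_false]
  congr 1; omega

theorem sp_paperfolding (n : ℕ) (hn : 1 ≤ n) : (sp n - 1) / 2 ≡ z (n - 1) [MOD 2] := by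
  unfold Nat.ModEq
  induction n using Nat.strong_induction_on with
  | _ n ih =>
    by_cases h : n % 2 = 0
    · -- n = 2m, m ≥ 1
      obtain ⟨m, rfl⟩ : ∃ m, n = 2*m := ⟨n/2, by omega⟩
      have hm : 1 ≤ m := by omega
      have h4 : sp (2*m) = sp m := by
        rcases Nat.lt_or_ge m 1 with h | h
        · omega
        · rw [show 2*m = (2*m-2) + 2 by omega, sp]
          simp only [show ((2*m-2)+2) % 2 = 0 by omega, if_true]
          congr 1; omega
      have hz : z (2*m - 1) = z (m-1) := by
        rw [show 2*m-1 = 2*(m-1)+1 by omega, z_odd]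
      rw [h4, hz]
      exact ih m (by omega) hm
    · -- n odd
      obtain ⟨m, rfl⟩ : ∃ m, n = 2*m+1 := ⟨n/2, by omega⟩
      have := sp_odd_idx m
      have hz : z (2*m+1-1) = m % 2 := by rw [show 2*m+1-1 = 2*m by omega, z_even]
      omega
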